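/- Let N ≥ 3 and λ = λ* := ((N-2)/2)². For the radial function G_γ(r) = (sin r)^{-(N-2)/2} (-ln sin r)^γ with 0 < γ < 1, defined for π/2 < r < π, one has G_γ'' (r) + (N-1) cot(r) G_γ'(r) + (λ*/sin² r) G_γ(r) = -(sin r)^{-(N-2)/2 - 2} [ γ(1-γ)(-ln sin r)^{γ-2} + E(r) ], where E(r)/(-ln sin r)^{γ-2} → 0 as r → π⁻; in particular -ΔG_γ - (λ*/sin²r)G_γ ~ γ(1-γ)(sin r)^{-(N-2)/2-2} (-ln sin r)^{γ-2} as r → π⁻, which is eventually positive. -/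

import Mathlib

/-!
In the variable `t = -log (sin r)` the barrier is `g(t) = e^{α t} t^γ` with `α = (n - 2) / 2`, and
`sin² r · (Δ + α² / sin² r)` applied to it equals
`(d/dt - α)² g - sin² r · (g'' - (2α + 1) g')`.
The first term is exactly `-γ (1 - γ) e^{α t} t^{γ - 2}`; the second is `O(sin² r · t²)` relative
to it, which tends to `0` because `sin r · log (sin r) → 0`.
-/

open Real Filter

open Set Topology

namespace CriticalBarrier

/-- The radial Laplace–Beltrami operator of `S^n` plus the critical Hardy potential. -/
noncomputable def criticalHardyOp (n : ℝ) (u : ℝ → ℝ) (r : ℝ) : ℝ :=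
  deriv (deriv u) r + (n - 1) * (cos r / sin r) * deriv u r
    + ((n - 2) / 2) ^ 2 / sin r ^ 2 * u r

noncomputable def barrier (α γ r : ℝ) : ℝ := sin r ^ (-α) * (-log (sin r)) ^ γ

noncomputable def barrierDeriv (α γ r : ℝ) : ℝ :=
  -cos r * sin r ^ (-α - 1) * (α * (-log (sin r)) ^ γ + γ * (-log (sin r)) ^ (γ - 1))

noncomputable def barrierRemainder (α γ r : ℝ) : ℝ :=
  -sin r ^ 2 * ((α + α ^ 2) * (-log (sin r)) ^ γ + γ * (-log (sin r)) ^ (γ - 1)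
    + γ * (1 - γ) * (-log (sin r)) ^ (γ - 2))

theorem rpow_eq_rpow_mul_pow {x p q : ℝ} (hx : 0 < x) (k : ℕ) (h : p = q + k) :
    x ^ p = x ^ q * x ^ k := by
  rw [h, rpow_add_natCast hx.ne']

section

variable {r : ℝ} (hs : sin r ∈ Ioo 0 1)
include hs

theorem neg_log_sin_pos : 0 < -log (sin r) := by
  linarith [log_neg hs.1 hs.2]

theorem hasDerivAt_neg_log_sin_rpow (p : ℝ) :
    HasDerivAt (fun x => (-log (sin x)) ^ p)
      (-(cos r / sin r) * p * (-log (sin r)) ^ (p - 1)) r :=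
  ((hasDerivAt_sin r).log hs.1.ne').neg.rpow_const (Or.inl (neg_log_sin_pos hs).ne')

theorem hasDerivAt_barrier (α γ : ℝ) : HasDerivAt (barrier α γ) (barrierDeriv α γ r) r := by
  refine (((hasDerivAt_sin r).rpow_const (p := -α) (Or.inl hs.1.ne')).mul
    (hasDerivAt_neg_log_sin_rpow hs γ)).congr_deriv ?_
  rw [barrierDeriv, rpow_sub_one hs.1.ne']
  field_simp
  ring

theorem hasDerivAt_barrierDeriv (α γ : ℝ) :
    HasDerivAt (barrierDeriv α γ)
      (sin r ^ (-α - 2) * ((sin r ^ 2 + (α + 1) * cos r ^ 2)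
          * (α * (-log (sin r)) ^ γ + γ * (-log (sin r)) ^ (γ - 1))
        + cos r ^ 2 * (α * γ * (-log (sin r)) ^ (γ - 1)
          + γ * (γ - 1) * (-log (sin r)) ^ (γ - 2)))) r := by
  have hs0 : sin r ≠ 0 := hs.1.ne'
  have hP := ((hasDerivAt_neg_log_sin_rpow hs γ).const_mul α).fun_add
    ((hasDerivAt_neg_log_sin_rpow hs (γ - 1)).const_mul γ)
  refine (((hasDerivAt_cos r).fun_neg.fun_mul
    ((hasDerivAt_sin r).rpow_const (p := -α - 1) (Or.inl hs0))).fun_mul hP).congr_deriv ?_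
  rw [show -α - 1 - 1 = -α - 2 by ring, show γ - 1 - 1 = γ - 2 by ring,
    show -α - 1 = -α - 2 + 1 by ring, rpow_add_one hs0]
  field_simp
  ring

theorem criticalHardyOp_barrier {n γ : ℝ} :
    criticalHardyOp n (barrier ((n - 2) / 2) γ) r =
      -sin r ^ (-((n - 2) / 2) - 2) *
        (γ * (1 - γ) * (-log (sin r)) ^ (γ - 2) + barrierRemainder ((n - 2) / 2) γ r) := by
  set α := (n - 2) / 2
  have hderiv : deriv (barrier α γ) =ᶠ[𝓝 r] barrierDeriv α γ := by
    filter_upwards [(isOpen_Ioo.preimage continuous_sin).mem_nhds hs] with x hx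
    exact (hasDerivAt_barrier hx α γ).deriv
  rw [criticalHardyOp, hderiv.deriv_eq, hderiv.eq_of_nhds,
    (hasDerivAt_barrierDeriv hs α γ).deriv, show n - 1 = 2 * α + 1 by ring]
  have hs0 : sin r ≠ 0 := hs.1.ne'
  have ht := neg_log_sin_pos hs
  have hsin_α : sin r ^ (-α) = sin r ^ (-α - 2) * sin r ^ 2 :=
    rpow_eq_rpow_mul_pow hs.1 2 (by ring)
  have hsin_α1 : sin r ^ (-α - 1) = sin r ^ (-α - 2) * sin r ^ 1 :=
    rpow_eq_rpow_mul_pow hs.1 1 (by ring)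
  have hlog_γ : (-log (sin r)) ^ γ = (-log (sin r)) ^ (γ - 2) * (-log (sin r)) ^ 2 :=
    rpow_eq_rpow_mul_pow ht 2 (by ring)
  have hlog_γ1 : (-log (sin r)) ^ (γ - 1) = (-log (sin r)) ^ (γ - 2) * (-log (sin r)) ^ 1 :=
    rpow_eq_rpow_mul_pow ht 1 (by ring)
  simp only [barrier, barrierDeriv, barrierRemainder, hsin_α, hsin_α1, hlog_γ, hlog_γ1, pow_one]
  field_simp
  rw [cos_sq']
  ring

theorem barrierRemainder_div {α γ : ℝ} :
    barrierRemainder α γ r / (-log (sin r)) ^ (γ - 2) =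
      -((α + α ^ 2) * (sin r * log (sin r)) ^ 2 - γ * sin r * (sin r * log (sin r))
        + γ * (1 - γ) * sin r ^ 2) := by
  have ht := neg_log_sin_pos hs
  have hlog_γ : (-log (sin r)) ^ γ = (-log (sin r)) ^ (γ - 2) * (-log (sin r)) ^ 2 :=
    rpow_eq_rpow_mul_pow ht 2 (by ring)
  have hlog_γ1 : (-log (sin r)) ^ (γ - 1) = (-log (sin r)) ^ (γ - 2) * (-log (sin r)) ^ 1 :=
    rpow_eq_rpow_mul_pow ht 1 (by ring)
  rw [div_eq_iff (rpow_pos_of_pos ht _).ne', barrierRemainder, hlog_γ, hlog_γ1, pow_one]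
  ring

end

theorem sin_mem_Ioo_of_mem_Ioo {r : ℝ} (hr : r ∈ Ioo (π / 2) π) : sin r ∈ Ioo 0 1 := by
  have hcos : cos r < 0 := cos_neg_of_pi_div_two_lt_of_lt hr.1 (by linarith [hr.2, pi_pos])
  have hsin : 0 < sin r := sin_pos_of_pos_of_lt_pi (by linarith [hr.1, pi_pos]) hr.2
  exact ⟨hsin, by nlinarith [sin_sq_add_cos_sq r]⟩

theorem eventually_sin_mem_Ioo_nhdsLT_pi : ∀ᶠ r in 𝓝[<] π, sin r ∈ Ioo 0 1 :=
  mem_of_superset (Ioo_mem_nhdsLT (by linarith [pi_pos] : π / 2 < π))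
    fun _ => sin_mem_Ioo_of_mem_Ioo

theorem tendsto_sin_nhdsLT_pi : Tendsto sin (𝓝[<] π) (𝓝[>] 0) := by
  refine tendsto_nhdsWithin_iff.2 ⟨?_, eventually_sin_mem_Ioo_nhdsLT_pi.mono fun _ h => h.1⟩
  simpa using (continuous_sin.tendsto π).mono_left nhdsWithin_le_nhds

theorem tendsto_barrierRemainder_div (α γ : ℝ) :
    Tendsto (fun r => barrierRemainder α γ r / (-log (sin r)) ^ (γ - 2)) (𝓝[<] π) (𝓝 0) := by
  have hx : Tendsto (fun x : ℝ => x) (𝓝[>] 0) (𝓝 0) := tendsto_nhdsWithin_of_tendsto_nhds tendsto_id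
  have hxlog : Tendsto (fun x => x * log x) (𝓝[>] 0) (𝓝 0) :=
    tendsto_nhdsWithin_of_tendsto_nhds (by simpa using continuous_mul_log.tendsto 0)
  have hpoly : Tendsto (fun x => -((α + α ^ 2) * (x * log x) ^ 2 - γ * x * (x * log x)
      + γ * (1 - γ) * x ^ 2)) (𝓝[>] 0) (𝓝 0) := by
    simpa using (((hxlog.pow 2).const_mul _).sub ((hx.const_mul γ).mul hxlog)
      |>.add ((hx.pow 2).const_mul _)).neg
  refine (hpoly.comp tendsto_sin_nhdsLT_pi).congr' ?_
  filter_upwards [eventually_sin_mem_Ioo_nhdsLT_pi] with r hr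
  exact (barrierRemainder_div hr).symm

end CriticalBarrier

section Asymptotics

variable {ι : Type*} {l : Filter ι} {f A M E : ι → ℝ} {c : ℝ}

theorem tendsto_neg_div_of_eq_neg_mul (hc : c ≠ 0) (hA : ∀ᶠ x in l, A x ≠ 0)
    (hM : ∀ᶠ x in l, M x ≠ 0) (hf : ∀ᶠ x in l, f x = -A x * (c * M x + E x))
    (hE : Tendsto (fun x => E x / M x) l (𝓝 0)) :
    Tendsto (fun x => -f x / (c * A x * M x)) l (𝓝 1) := by
  refine (by simpa using (hE.div_const c).const_add 1 :
    Tendsto (fun x => 1 + E x / M x / c) l (𝓝 1)).congr' ?_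
  filter_upwards [hA, hM, hf] with x hAx hMx hfx
  rw [hfx]
  field_simp

theorem eventually_pos_of_tendsto_div_one {g h : ι → ℝ} (hh : ∀ᶠ x in l, 0 < h x)
    (hlim : Tendsto (fun x => g x / h x) l (𝓝 1)) : ∀ᶠ x in l, 0 < g x := by
  filter_upwards [hlim.eventually (eventually_gt_nhds one_pos), hh] with x hx hhx
  exact (div_pos_iff_of_pos_right hhx).1 hx

end Asymptotics

open CriticalBarrier in
theorem critical_barrier_asymptotics_general (N : ℕ) (γ : ℝ)
    (hγ0 : 0 < γ) (hγ1 : γ < 1) :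
    ∃ E : ℝ → ℝ,
      (∀ r ∈ Set.Ioo (π / 2) π,
        deriv (deriv (fun s : ℝ =>
            Real.sin s ^ (-(((N : ℝ) - 2) / 2)) * (-Real.log (Real.sin s)) ^ γ)) r
          + ((N : ℝ) - 1) * (Real.cos r / Real.sin r)
            * deriv (fun s : ℝ =>
                Real.sin s ^ (-(((N : ℝ) - 2) / 2)) * (-Real.log (Real.sin s)) ^ γ) r
          + ((((N : ℝ) - 2) / 2) ^ 2 / Real.sin r ^ 2)
            * (Real.sin r ^ (-(((N : ℝ) - 2) / 2)) * (-Real.log (Real.sin r)) ^ γ)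
        = -(Real.sin r ^ (-(((N : ℝ) - 2) / 2) - 2))
            * (γ * (1 - γ) * (-Real.log (Real.sin r)) ^ (γ - 2) + E r)) ∧
      Tendsto (fun r => E r / (-Real.log (Real.sin r)) ^ (γ - 2))
        (nhdsWithin π (Set.Iio π)) (nhds 0) ∧
      Tendsto (fun r =>
          -(deriv (deriv (fun s : ℝ =>
              Real.sin s ^ (-(((N : ℝ) - 2) / 2)) * (-Real.log (Real.sin s)) ^ γ)) r
            + ((N : ℝ) - 1) * (Real.cos r / Real.sin r)
              * deriv (fun s : ℝ =>
                  Real.sin s ^ (-(((N : ℝ) - 2) / 2)) * (-Real.log (Real.sin s)) ^ γ) r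
            + ((((N : ℝ) - 2) / 2) ^ 2 / Real.sin r ^ 2)
              * (Real.sin r ^ (-(((N : ℝ) - 2) / 2)) * (-Real.log (Real.sin r)) ^ γ))
          / (γ * (1 - γ) * Real.sin r ^ (-(((N : ℝ) - 2) / 2) - 2)
              * (-Real.log (Real.sin r)) ^ (γ - 2)))
        (nhdsWithin π (Set.Iio π)) (nhds 1) ∧
      (∀ᶠ r in nhdsWithin π (Set.Iio π),
        0 < -(deriv (deriv (fun s : ℝ =>
              Real.sin s ^ (-(((N : ℝ) - 2) / 2)) * (-Real.log (Real.sin s)) ^ γ)) r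
            + ((N : ℝ) - 1) * (Real.cos r / Real.sin r)
              * deriv (fun s : ℝ =>
                  Real.sin s ^ (-(((N : ℝ) - 2) / 2)) * (-Real.log (Real.sin s)) ^ γ) r
            + ((((N : ℝ) - 2) / 2) ^ 2 / Real.sin r ^ 2)
              * (Real.sin r ^ (-(((N : ℝ) - 2) / 2)) * (-Real.log (Real.sin r)) ^ γ))) := by
  show ∃ E : ℝ → ℝ,
    (∀ r ∈ Ioo (π / 2) π, criticalHardyOp N (barrier ((N - 2) / 2) γ) r =
      -sin r ^ (-(((N : ℝ) - 2) / 2) - 2) * (γ * (1 - γ) * (-log (sin r)) ^ (γ - 2) + E r)) ∧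
    Tendsto (fun r => E r / (-log (sin r)) ^ (γ - 2)) (𝓝[<] π) (𝓝 0) ∧
    Tendsto (fun r => -criticalHardyOp N (barrier ((N - 2) / 2) γ) r /
      (γ * (1 - γ) * sin r ^ (-(((N : ℝ) - 2) / 2) - 2) * (-log (sin r)) ^ (γ - 2)))
      (𝓝[<] π) (𝓝 1) ∧
    ∀ᶠ r in 𝓝[<] π, 0 < -criticalHardyOp N (barrier ((N - 2) / 2) γ) r
  have hsin := eventually_sin_mem_Ioo_nhdsLT_pi
  have hc : 0 < γ * (1 - γ) := mul_pos hγ0 (sub_pos.2 hγ1)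
  have hA : ∀ᶠ r in 𝓝[<] π, 0 < sin r ^ (-(((N : ℝ) - 2) / 2) - 2) :=
    hsin.mono fun r hr => rpow_pos_of_pos hr.1 _
  have hM : ∀ᶠ r in 𝓝[<] π, 0 < (-log (sin r)) ^ (γ - 2) :=
    hsin.mono fun r hr => rpow_pos_of_pos (neg_log_sin_pos hr) _
  have hratio := tendsto_neg_div_of_eq_neg_mul hc.ne' (hA.mono fun _ h => h.ne')
    (hM.mono fun _ h => h.ne') (hsin.mono fun r hr => criticalHardyOp_barrier hr)
    (tendsto_barrierRemainder_div _ γ)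
  refine ⟨barrierRemainder _ γ,
    fun r hr => criticalHardyOp_barrier (sin_mem_Ioo_of_mem_Ioo hr),
    tendsto_barrierRemainder_div _ γ, hratio, eventually_pos_of_tendsto_div_one ?_ hratio⟩
  filter_upwards [hA, hM] with r hAr hMr
  exact mul_pos (mul_pos hc hAr) hMr

/-- asymptotic expansion of the critical-Hardy operator applied to
G_γ(r) = (sin r)^{-(N-2)/2} (-ln sin r)^γ near r = π. -/
theorem critical_barrier_asymptotics (N : ℕ) (hN : 3 ≤ N) (γ : ℝ)
    (hγ0 : 0 < γ) (hγ1 : γ < 1) :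
    ∃ E : ℝ → ℝ,
      (∀ r ∈ Set.Ioo (π / 2) π,
        deriv (deriv (fun s : ℝ =>
            Real.sin s ^ (-(((N : ℝ) - 2) / 2)) * (-Real.log (Real.sin s)) ^ γ)) r
          + ((N : ℝ) - 1) * (Real.cos r / Real.sin r)
            * deriv (fun s : ℝ =>
                Real.sin s ^ (-(((N : ℝ) - 2) / 2)) * (-Real.log (Real.sin s)) ^ γ) r
          + ((((N : ℝ) - 2) / 2) ^ 2 / Real.sin r ^ 2)
            * (Real.sin r ^ (-(((N : ℝ) - 2) / 2)) * (-Real.log (Real.sin r)) ^ γ)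
        = -(Real.sin r ^ (-(((N : ℝ) - 2) / 2) - 2))
            * (γ * (1 - γ) * (-Real.log (Real.sin r)) ^ (γ - 2) + E r)) ∧
      Tendsto (fun r => E r / (-Real.log (Real.sin r)) ^ (γ - 2))
        (nhdsWithin π (Set.Iio π)) (nhds 0) ∧
      Tendsto (fun r =>
          -(deriv (deriv (fun s : ℝ =>
              Real.sin s ^ (-(((N : ℝ) - 2) / 2)) * (-Real.log (Real.sin s)) ^ γ)) r
            + ((N : ℝ) - 1) * (Real.cos r / Real.sin r)
              * deriv (fun s : ℝ =>
                  Real.sin s ^ (-(((N : ℝ) - 2) / 2)) * (-Real.log (Real.sin s)) ^ γ) r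
            + ((((N : ℝ) - 2) / 2) ^ 2 / Real.sin r ^ 2)
              * (Real.sin r ^ (-(((N : ℝ) - 2) / 2)) * (-Real.log (Real.sin r)) ^ γ))
          / (γ * (1 - γ) * Real.sin r ^ (-(((N : ℝ) - 2) / 2) - 2)
              * (-Real.log (Real.sin r)) ^ (γ - 2)))
        (nhdsWithin π (Set.Iio π)) (nhds 1) ∧
      (∀ᶠ r in nhdsWithin π (Set.Iio π),
        0 < -(deriv (deriv (fun s : ℝ =>
              Real.sin s ^ (-(((N : ℝ) - 2) / 2)) * (-Real.log (Real.sin s)) ^ γ)) r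
            + ((N : ℝ) - 1) * (Real.cos r / Real.sin r)
              * deriv (fun s : ℝ =>
                  Real.sin s ^ (-(((N : ℝ) - 2) / 2)) * (-Real.log (Real.sin s)) ^ γ) r
            + ((((N : ℝ) - 2) / 2) ^ 2 / Real.sin r ^ 2)
              * (Real.sin r ^ (-(((N : ℝ) - 2) / 2)) * (-Real.log (Real.sin r)) ^ γ))) :=
  critical_barrier_asymptotics_general N γ hγ0 hγ1
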